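/- arXiv:1803.03057 — 6 statements merged into one kernel-verified Lean document; each statement's English description precedes it below -/
import Mathlib

section
/- For every finite simple graph on n ≥ 2 vertices with m edges and vertex degrees k_1, …, k_n, one has ∑_{i=1}^n k_i² ≤ m·(2m/(n−1) + n − 2). -/
/-!
Induction on the number of vertices `n + 1`, deleting a vertex `v` of minimum degree `d`.
Deleting `v` lowers the degree of each of its neighbours by one, so `∑ k_i²` drops by
`d² - d + 2S`, where `S` is the degree sum over the neighbours of `v`, and `m` drops by `d`.
Since every degree lies between `d` and `n`, `S ≤ d n` and `S + d (n + 1 - d) ≤ 2m`; together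
with `(n + 1) d ≤ 2m` and `2(m - d) ≤ n(n - 1)` this turns the induction step into a polynomial
inequality in `n`, `m`, `d`.
-/

open Finset Fintype

theorem Fintype.sum_compl_singleton_add {V M : Type*} [Fintype V] [DecidableEq V]
    [AddCommMonoid M] (v : V) (f : V → M) :
    ∑ u : ↥({v}ᶜ : Set V), f u + f v = ∑ u, f u := by
  rw [sum_set_coe, Set.toFinset_compl, Set.toFinset_singleton, sum_eq_add_sum_compl v, add_comm]

theorem de_caen_step {n m m' d S P P' : ℝ} (hn : 2 ≤ n) (hd : d = 0 ∨ 1 ≤ d) (hdn : d ≤ n)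
    (hS : S ≤ d * n) (hS' : S + d * (n + 1 - d) ≤ 2 * m) (hm : (n + 1) * d ≤ 2 * m)
    (hm' : 2 * m' ≤ n * (n - 1)) (hm'd : m' + d = m) (hP : P + d = P' + d ^ 2 + 2 * S)
    (hP' : (n - 1) * P' ≤ 2 * m' ^ 2 + (n - 1) * (n - 2) * m') :
    n * P ≤ 2 * m ^ 2 + n * (n - 1) * m := by
  obtain rfl : m' = m - d := by linarith
  have hd0 : 0 ≤ d := by rcases hd with rfl | hd <;> linarith
  have hnn : 0 ≤ n * (n - 1) := by nlinarith
  have hcorner : 0 ≤ d * (d - 1) * ((n - d) * (n + d - 1)) := by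
    refine mul_nonneg ?_ (mul_nonneg (by linarith) (by linarith))
    rcases hd with rfl | hd
    · simp
    · nlinarith
  -- The goal with `P` eliminated through `hP` and `hP'`. After inserting the smaller bound on
  -- `S`, the slack is concave in `m` and least at the corner `2m = d (2n + 1 - d)`, where it
  -- equals `d (d - 1) (n - d) (n + d - 1) / 2`.
  have key : 2 * n * (n - 1) * S ≤ -2 * m ^ 2 + 4 * n * m * d - 2 * n * d ^ 2 + m * n * (n - 1)
      + n * (n - 1) ^ 2 * d - n * (n - 1) * d ^ 2 := by
    rcases le_total (d * (2 * n + 1 - d)) (2 * m) with h | h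
    · have h1 : 0 ≤ d * (2 * n - 3 + d) := mul_nonneg hd0 (by linarith)
      linarith [mul_nonneg hnn (sub_nonneg.2 hS), mul_nonneg (sub_nonneg.2 h)
        (by linarith : 0 ≤ 2 * d + n * (n - 1) - 2 * m + d * (2 * n - 3 + d))]
    · have h1 : 0 ≤ 3 * n * (n - 1) - d * (n - 2 + d) := by nlinarith
      linarith [mul_nonneg hnn (by linarith : 0 ≤ 2 * m - d * (n + 1 - d) - S),
        mul_nonneg (sub_nonneg.2 h)
          (by linarith : 0 ≤ 2 * m - (n + 1) * d + 3 * n * (n - 1) - d * (n - 2 + d))]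
  have h : (n - 1) * (n * P) ≤ (n - 1) * (2 * m ^ 2 + n * (n - 1) * m) := by
    nlinarith [mul_le_mul_of_nonneg_left hP' (by linarith : (0 : ℝ) ≤ n)]
  exact le_of_mul_le_mul_left h (by linarith)

namespace SimpleGraph

section

variable {V : Type*} [Fintype V] (G : SimpleGraph V) [DecidableRel G.Adj]

theorem card_mul_minDegree_le : card V * G.minDegree ≤ 2 * #G.edgeFinset := by
  rw [← sum_degrees_eq_twice_card_edges, ← smul_eq_mul, ← card_univ]
  exact card_nsmul_le_sum _ _ _ fun u _ => G.minDegree_le_degree u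

theorem two_mul_card_edgeFinset_le : 2 * #G.edgeFinset ≤ card V * (card V - 1) := by
  rw [← sum_degrees_eq_twice_card_edges, ← smul_eq_mul, ← card_univ]
  exact sum_le_card_nsmul _ _ _ fun u _ => Nat.le_sub_one_of_lt (G.degree_lt_card_verts u)

theorem sum_degree_neighborFinset_le (v : V) :
    ∑ u ∈ G.neighborFinset v, G.degree u ≤ G.degree v * (card V - 1) := by
  calc ∑ u ∈ G.neighborFinset v, G.degree u
      ≤ #(G.neighborFinset v) • (card V - 1) :=
        sum_le_card_nsmul _ _ _ fun u _ => Nat.le_sub_one_of_lt (G.degree_lt_card_verts u)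
    _ = G.degree v * (card V - 1) := by rw [card_neighborFinset_eq_degree, smul_eq_mul]

variable [DecidableEq V]

theorem sum_degree_neighborFinset_add_minDegree_mul_le (v : V) :
    ∑ u ∈ G.neighborFinset v, G.degree u + G.minDegree * (card V - G.degree v)
      ≤ 2 * #G.edgeFinset := by
  rw [← sum_degrees_eq_twice_card_edges, ← sum_add_sum_compl (G.neighborFinset v)]
  gcongr
  calc G.minDegree * (card V - G.degree v) = #(G.neighborFinset v)ᶜ • G.minDegree := by
        rw [card_compl, card_neighborFinset_eq_degree, smul_eq_mul, mul_comm]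
    _ ≤ _ := card_nsmul_le_sum _ _ _ fun u _ => G.minDegree_le_degree u

theorem card_edgeFinset_induce_compl_singleton_add (v : V) :
    #(G.induce {v}ᶜ).edgeFinset + G.degree v = #G.edgeFinset := by
  rw [card_edgeFinset_induce_compl_singleton, card_edgeFinset_deleteIncidenceSet,
    Nat.sub_add_cancel (G.degree_le_card_edgeFinset v)]

theorem degree_induce_compl_singleton_add (v : V) (u : ↥({v}ᶜ : Set V)) :
    (G.induce {v}ᶜ).degree u + (if G.Adj v u then 1 else 0) = G.degree u := by
  have h := congrArg Finset.card (G.map_neighborFinset_induce u)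
  rw [card_map, card_neighborFinset_eq_degree, Set.toFinset_compl, Set.toFinset_singleton,
    ← sdiff_eq_inter_compl, sdiff_singleton_eq_erase] at h
  rw [h, ← card_neighborFinset_eq_degree]
  split_ifs with huv
  · exact card_erase_add_one (by simpa using huv.symm)
  · rw [erase_eq_of_notMem (by simpa [adj_comm] using huv), add_zero]

theorem sum_degree_sq_induce_compl_singleton (v : V) :
    ∑ u, (G.induce {v}ᶜ).degree u ^ 2 + G.degree v ^ 2 + 2 * ∑ u ∈ G.neighborFinset v, G.degree u
      = ∑ u, G.degree u ^ 2 + G.degree v := by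
  have key (u : ↥({v}ᶜ : Set V)) :
      (G.induce {v}ᶜ).degree u ^ 2 + 2 * (if G.Adj v u then G.degree u else 0)
        = G.degree u ^ 2 + (if G.Adj v u then 1 else 0) := by
    rw [← G.degree_induce_compl_singleton_add v u]
    split_ifs <;> ring
  have hS : ∑ u ∈ G.neighborFinset v, G.degree u
      = ∑ u : ↥({v}ᶜ : Set V), if G.Adj v u then G.degree u else 0 := by
    rw [neighborFinset_eq_filter, sum_filter, ← Fintype.sum_compl_singleton_add v]
    simp only [G.irrefl, if_false, add_zero]
  have hd : ∑ u : ↥({v}ᶜ : Set V), (if G.Adj v u then 1 else 0) = G.degree v := by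
    rw [← card_neighborFinset_eq_degree, neighborFinset_eq_filter, card_filter,
      ← Fintype.sum_compl_singleton_add v]
    simp only [G.irrefl, if_false, add_zero]
  have hsum := Fintype.sum_congr _ _ key
  rw [sum_add_distrib, sum_add_distrib, ← mul_sum, hd] at hsum
  rw [hS, ← Fintype.sum_compl_singleton_add v (fun u => G.degree u ^ 2)]
  linarith

theorem mul_sum_degree_sq_le_of_induce_compl_singleton {n : ℕ} (hn : 2 ≤ n)
    (hV : card V = n + 1) {v : V} (hv : G.minDegree = G.degree v)
    (hind : ((n : ℝ) - 1) * ∑ u, ((G.induce {v}ᶜ).degree u : ℝ) ^ 2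
      ≤ 2 * (#(G.induce {v}ᶜ).edgeFinset : ℝ) ^ 2
        + ((n : ℝ) - 1) * ((n : ℝ) - 2) * #(G.induce {v}ᶜ).edgeFinset) :
    (n : ℝ) * ∑ u, (G.degree u : ℝ) ^ 2
      ≤ 2 * (#G.edgeFinset : ℝ) ^ 2 + (n : ℝ) * ((n : ℝ) - 1) * #G.edgeFinset := by
  have hdn : G.degree v ≤ n := by have := G.degree_lt_card_verts v; omega
  have hS := G.sum_degree_neighborFinset_le v
  have hS' := G.sum_degree_neighborFinset_add_minDegree_mul_le v
  have hδ := G.card_mul_minDegree_le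
  have hm' := (G.induce {v}ᶜ).two_mul_card_edgeFinset_le
  rw [hV, Nat.add_sub_cancel] at hS
  rw [hv, hV] at hS' hδ
  rw [Fintype.card_compl_set, Set.card_singleton, hV, Nat.add_sub_cancel] at hm'
  refine de_caen_step (d := G.degree v) (S := ∑ u ∈ G.neighborFinset v, (G.degree u : ℝ))
    (by exact_mod_cast hn) ?_ (by exact_mod_cast hdn) (by exact_mod_cast hS) ?_
    (by exact_mod_cast hδ) ?_ (by exact_mod_cast G.card_edgeFinset_induce_compl_singleton_add v)
    (by exact_mod_cast (G.sum_degree_sq_induce_compl_singleton v).symm) hind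
  · rcases Nat.eq_zero_or_pos (G.degree v) with h | h
    · exact .inl (by exact_mod_cast h)
    · exact .inr (by exact_mod_cast h)
  · have := (Nat.cast_le (α := ℝ)).2 hS'
    push_cast [Nat.cast_sub (hdn.trans n.le_succ)] at this
    linarith
  · have := (Nat.cast_le (α := ℝ)).2 hm'
    push_cast [Nat.cast_sub (by omega : 1 ≤ n)] at this
    exact this

end

theorem card_sub_one_mul_sum_degree_sq_le {V : Type*} [Fintype V] (G : SimpleGraph V)
    [DecidableRel G.Adj] (hV : 2 ≤ card V) :
    ((card V : ℝ) - 1) * ∑ v, (G.degree v : ℝ) ^ 2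
      ≤ 2 * (#G.edgeFinset : ℝ) ^ 2 + ((card V : ℝ) - 1) * ((card V : ℝ) - 2) * #G.edgeFinset := by
  classical
  obtain ⟨n, hVn⟩ : ∃ n, card V = n := ⟨_, rfl⟩
  rw [hVn] at hV ⊢
  induction n, hV using Nat.le_induction generalizing V with
  | base =>
    have hsq : ∑ v, G.degree v ^ 2 ≤ 2 * #G.edgeFinset := by
      rw [← sum_degrees_eq_twice_card_edges]
      refine sum_le_sum fun v _ => ?_
      have := hVn ▸ G.degree_lt_card_verts v
      nlinarith
    have hm : #G.edgeFinset ≤ #G.edgeFinset ^ 2 := Nat.le_self_pow two_ne_zero _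
    norm_num
    exact_mod_cast hsq.trans (by omega)
  | succ n hn ih =>
    have : Nonempty V := card_pos_iff.mp (by omega)
    obtain ⟨v, hv⟩ := G.exists_minimal_degree_vertex
    have hW : card ↥({v}ᶜ : Set V) = n := by
      rw [Fintype.card_compl_set, Set.card_singleton, hVn, Nat.add_sub_cancel]
    have := G.mul_sum_degree_sq_le_of_induce_compl_singleton hn hVn hv (ih _ hW)
    push_cast
    convert this using 2 <;> ring

end SimpleGraph

/-- **de Caen's bound.**  For every finite simple graph on `n ≥ 2` vertices with `m` edges
and vertex degrees `k_1, …, k_n`, one has `∑ i, k_i^2 ≤ m · (2m/(n-1) + n - 2)`. -/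
theorem sum_sq_degrees_le (n : ℕ) (hn : 2 ≤ n) (G : SimpleGraph (Fin n))
    [DecidableRel G.Adj] (m : ℕ) (hm : m = G.edgeFinset.card) :
    ∑ i, (G.degree i : ℝ) ^ 2
      ≤ (m : ℝ) * (2 * (m : ℝ) / ((n : ℝ) - 1) + (n : ℝ) - 2) := by
  subst hm
  have h := G.card_sub_one_mul_sum_degree_sq_le (by simpa using hn)
  rw [Fintype.card_fin] at h
  have hn1 : (0 : ℝ) < n - 1 := by
    have : (2 : ℝ) ≤ n := by exact_mod_cast hn
    linarith
  calc ∑ i, (G.degree i : ℝ) ^ 2 = ((n : ℝ) - 1) * (∑ i, (G.degree i : ℝ) ^ 2) / ((n : ℝ) - 1) :=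
        (mul_div_cancel_left₀ _ hn1.ne').symm
    _ ≤ (2 * (#G.edgeFinset : ℝ) ^ 2 + ((n : ℝ) - 1) * ((n : ℝ) - 2) * #G.edgeFinset)
          / ((n : ℝ) - 1) := by gcongr
    _ = _ := by field_simp; ring
end

section
/- For every finite simple graph on n ≥ 2 vertices with m edges and vertex degrees k_1, …, k_n, one has n(n−1)·∑_{i=1}^n k_i² − (n−1)·(2m)² ≤ n·m·(n(n−1) − 2m). -/
/-!
For a symmetric real matrix `y` with row sums `sᵢ`, expanding `∑ᵢⱼ (sᵢ + sⱼ - n yᵢⱼ)² ≥ 0` gives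
`2n ∑ sᵢ² ≤ n² ∑ yᵢⱼ² + 2 (∑ yᵢⱼ)²`. Apply this to `y = N A - 2m (J - I)` with `N = n(n-1)`,
`A` the adjacency matrix and `J - I` that of the complete graph: `y` is `N` times the adjacency
matrix centred at the edge density off the diagonal, so its entries sum to `0`, its row sums are
`N kᵢ - 2m(n-1)`, and `∑ yᵢⱼ² = 2mN(N-2m)`. The resulting inequality is the claim multiplied by
`2nN`.
-/

open Finset

section RowSums

variable {ι : Type*} [Fintype ι]

theorem two_mul_card_mul_sum_sq_rowSum_le (y : ι → ι → ℝ) (hy : ∀ i j, y i j = y j i) :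
    2 * Fintype.card ι * ∑ i, (∑ j, y i j) ^ 2
      ≤ Fintype.card ι ^ 2 * ∑ i, ∑ j, y i j ^ 2 + 2 * (∑ i, ∑ j, y i j) ^ 2 := by
  set n : ℝ := (Fintype.card ι : ℝ)
  set s : ι → ℝ := fun i => ∑ j, y i j
  have sum_sq_add : ∑ i, ∑ j, (s i + s j) ^ 2 = 2 * n * ∑ i, s i ^ 2 + 2 * (∑ i, s i) ^ 2 := by
    simp only [add_sq, sum_add_distrib, sum_const, card_univ, nsmul_eq_mul, ← mul_sum,
      mul_assoc, ← sum_mul, sq (∑ i, s i)]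
    ring
  have sum_add_mul : ∑ i, ∑ j, (s i + s j) * y i j = 2 * ∑ i, s i ^ 2 := by
    simp only [add_mul, sum_add_distrib, ← mul_sum]
    rw [sum_comm (f := fun i j => s j * y i j)]
    simp only [← mul_sum, fun j => sum_congr rfl fun i (_ : i ∈ univ) => hy i j, sq]
    ring
  have expand : ∑ i, ∑ j, (s i + s j - n * y i j) ^ 2
      = n ^ 2 * ∑ i, ∑ j, y i j ^ 2 + 2 * (∑ i, s i) ^ 2 - 2 * n * ∑ i, s i ^ 2 := by
    have pointwise : ∀ i j, (s i + s j - n * y i j) ^ 2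
        = (s i + s j) ^ 2 - 2 * n * ((s i + s j) * y i j) + n ^ 2 * y i j ^ 2 := by
      intro i j; ring
    simp only [pointwise, sum_add_distrib, sum_sub_distrib, ← mul_sum, sum_sq_add, sum_add_mul]
    ring
  have nonneg := sum_nonneg fun i (_ : i ∈ univ) =>
    sum_nonneg fun j (_ : j ∈ univ) => sq_nonneg (s i + s j - n * y i j)
  linarith

end RowSums

namespace SimpleGraph

variable {V : Type*} (G : SimpleGraph V) [DecidableRel G.Adj]

section AdjMatrix

variable [Fintype V] {R : Type*}

theorem sum_adjMatrix_apply [AddCommMonoidWithOne R] (i : V) :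
    ∑ j, G.adjMatrix R i j = G.degree i := by
  simp only [adjMatrix_apply, degree_eq_sum_if_adj]

theorem sum_degrees_cast_eq_twice_card_edges [NonAssocSemiring R] :
    ∑ i, (G.degree i : R) = 2 * #G.edgeFinset := by
  rw [← Nat.cast_sum, sum_degrees_eq_twice_card_edges, Nat.cast_mul, Nat.cast_ofNat]

theorem sum_sum_adjMatrix [NonAssocSemiring R] :
    ∑ i, ∑ j, G.adjMatrix R i j = 2 * (#G.edgeFinset : R) := by
  simp only [sum_adjMatrix_apply, sum_degrees_cast_eq_twice_card_edges]

theorem sum_adjMatrix_top_apply [DecidableEq V] [Ring R] (i : V) :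
    ∑ j, (⊤ : SimpleGraph V).adjMatrix R i j = Fintype.card V - 1 := by
  have : 0 < Fintype.card V := Fintype.card_pos_iff.mpr ⟨i⟩
  rw [sum_adjMatrix_apply, IsRegularOfDegree.top.degree_eq, Nat.cast_pred this]

end AdjMatrix

variable [DecidableEq V]

def weightedAdjMatrix (a b : ℝ) : Matrix V V ℝ :=
  a • G.adjMatrix ℝ - b • (⊤ : SimpleGraph V).adjMatrix ℝ

variable (a b : ℝ)

theorem weightedAdjMatrix_apply_comm (i j : V) :
    G.weightedAdjMatrix a b i j = G.weightedAdjMatrix a b j i := by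
  simp only [weightedAdjMatrix, Matrix.sub_apply, Matrix.smul_apply, adjMatrix_apply, adj_comm]

theorem weightedAdjMatrix_apply_sq (i j : V) :
    G.weightedAdjMatrix a b i j ^ 2
      = (a ^ 2 - 2 * a * b) * G.adjMatrix ℝ i j + b ^ 2 * (⊤ : SimpleGraph V).adjMatrix ℝ i j := by
  by_cases h : G.Adj i j
  · simp [weightedAdjMatrix, h, h.ne]; ring
  · by_cases hij : i = j <;> simp [weightedAdjMatrix, h, hij]

variable [Fintype V]

theorem sum_weightedAdjMatrix_apply (i : V) :
    ∑ j, G.weightedAdjMatrix a b i j = a * G.degree i - b * (Fintype.card V - 1) := by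
  simp only [weightedAdjMatrix, Matrix.sub_apply, Matrix.smul_apply, smul_eq_mul, sum_sub_distrib,
    ← mul_sum]
  rw [sum_adjMatrix_top_apply, sum_adjMatrix_apply]

theorem sum_sum_weightedAdjMatrix :
    ∑ i, ∑ j, G.weightedAdjMatrix a b i j
      = a * (2 * #G.edgeFinset) - b * (Fintype.card V * (Fintype.card V - 1)) := by
  simp only [weightedAdjMatrix, Matrix.sub_apply, Matrix.smul_apply, smul_eq_mul, sum_sub_distrib,
    ← mul_sum, sum_sum_adjMatrix, sum_adjMatrix_top_apply, sum_const, card_univ, nsmul_eq_mul]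
  ring

theorem sum_sum_weightedAdjMatrix_sq :
    ∑ i, ∑ j, G.weightedAdjMatrix a b i j ^ 2
      = (a ^ 2 - 2 * a * b) * (2 * #G.edgeFinset)
        + b ^ 2 * (Fintype.card V * (Fintype.card V - 1)) := by
  simp only [weightedAdjMatrix_apply_sq, sum_add_distrib, ← mul_sum, sum_sum_adjMatrix,
    sum_adjMatrix_top_apply, sum_const, card_univ, nsmul_eq_mul]

theorem two_mul_card_mul_sum_sq_degree_le :
    2 * Fintype.card V * ∑ i, (a * G.degree i - b * (Fintype.card V - 1)) ^ 2
      ≤ Fintype.card V ^ 2 * ((a ^ 2 - 2 * a * b) * (2 * #G.edgeFinset)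
          + b ^ 2 * (Fintype.card V * (Fintype.card V - 1)))
        + 2 * (a * (2 * #G.edgeFinset) - b * (Fintype.card V * (Fintype.card V - 1))) ^ 2 := by
  have := two_mul_card_mul_sum_sq_rowSum_le (G.weightedAdjMatrix a b)
    (G.weightedAdjMatrix_apply_comm a b)
  rw [sum_sum_weightedAdjMatrix, sum_sum_weightedAdjMatrix_sq] at this
  simpa only [sum_weightedAdjMatrix_apply] using this

end SimpleGraph

/-- **Division-free form of `v̄(G) ≤ 1`.**  For every finite simple graph on `n ≥ 2`
vertices with `m` edges and vertex degrees `k_1, …, k_n`, one has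
`n(n-1)·∑ i, k_i^2 - (n-1)·(2m)^2 ≤ n·m·(n(n-1) - 2m)`. -/
theorem normDegVar_le_one_div_free (n : ℕ) (hn : 2 ≤ n) (G : SimpleGraph (Fin n))
    [DecidableRel G.Adj] (m : ℕ) (hm : m = G.edgeFinset.card) :
    (n : ℝ) * ((n : ℝ) - 1) * ∑ i, (G.degree i : ℝ) ^ 2
        - ((n : ℝ) - 1) * (2 * (m : ℝ)) ^ 2
      ≤ (n : ℝ) * (m : ℝ) * ((n : ℝ) * ((n : ℝ) - 1) - 2 * (m : ℝ)) := by
  set N : ℝ := n * (n - 1)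
  have hpos : 0 < 2 * n * N := by
    have : (2 : ℝ) ≤ n := by exact_mod_cast hn
    have : 0 < N := by nlinarith
    positivity
  have key := G.two_mul_card_mul_sum_sq_degree_le N (2 * m)
  rw [Fintype.card_fin, ← hm] at key
  have sum_degree : ∑ i, (G.degree i : ℝ) = 2 * m := by
    rw [G.sum_degrees_cast_eq_twice_card_edges, ← hm]
  have sum_sq : ∑ i, (N * G.degree i - 2 * m * (n - 1)) ^ 2
      = N * (N * ∑ i, (G.degree i : ℝ) ^ 2 - (n - 1) * (2 * m) ^ 2) := by
    simp only [sub_sq, sum_add_distrib, sum_sub_distrib, mul_pow, ← mul_sum, ← sum_mul,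
      sum_degree, sum_const, card_univ, Fintype.card_fin, nsmul_eq_mul]
    ring
  rw [sum_sq] at key
  refine le_of_mul_le_mul_left ?_ hpos
  linear_combination key
end

section
/- Let G be a finite simple graph on n ≥ 2 vertices with m edges such that m ≥ 1 and 2m < n(n−1). Then the normalised degree variance satisfies 0 ≤ v̄(G) ≤ 1. -/
/-- The degree variance of a finite simple graph `G` on `n` vertices with `m` edges:
`v(G) = (1/(n-1)) · ∑ i, (k_i - 2m/n)^2`. -/
noncomputable def degVar {n : ℕ} (G : SimpleGraph (Fin n)) [DecidableRel G.Adj] : ℝ :=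
  (1 / ((n : ℝ) - 1)) *
    ∑ i, ((G.degree i : ℝ) - 2 * (G.edgeFinset.card : ℝ) / n) ^ 2

/-- The normalised degree variance `v̄(G) = ((n-1)/(n·m·(1-d))) · v(G)`, where
`d = 2m/(n(n-1))` is the density. -/
noncomputable def normDegVar {n : ℕ} (G : SimpleGraph (Fin n)) [DecidableRel G.Adj] : ℝ :=
  ((n : ℝ) - 1) /
      ((n : ℝ) * (G.edgeFinset.card : ℝ) *
        (1 - 2 * (G.edgeFinset.card : ℝ) / ((n : ℝ) * ((n : ℝ) - 1)))) *
    degVar G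

open Finset

/-- Key combinatorial inequality: `(∑ kᵤ)·(∑ (n-1-kᵤ)) ≤ 2n·∑ kᵤ(n-1-kᵤ)`. -/
lemma key_ineq {n : ℕ} (G : SimpleGraph (Fin n)) [DecidableRel G.Adj] :
    (∑ u : Fin n, (G.degree u : ℝ)) *
      (∑ u : Fin n, ((n : ℝ) - 1 - (G.degree u : ℝ))) ≤
    2 * (n : ℝ) *
      ∑ u : Fin n, (G.degree u : ℝ) * ((n : ℝ) - 1 - (G.degree u : ℝ)) := by
  classical
  set a : Fin n → Fin n → ℝ := fun u v => if G.Adj u v then 1 else 0 with ha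
  set b : Fin n → Fin n → ℝ := fun u v => if u ≠ v ∧ ¬ G.Adj u v then 1 else 0 with hb
  have ha_nonneg : ∀ u v, 0 ≤ a u v := by intro u v; simp only [ha]; split_ifs <;> norm_num
  have hb_nonneg : ∀ u v, 0 ≤ b u v := by intro u v; simp only [hb]; split_ifs <;> norm_num
  have ha_sum : ∀ u, ∑ v, a u v = (G.degree u : ℝ) := by
    intro u
    simp only [ha]
    rw [Finset.sum_boole]
    congr 1
    rw [← SimpleGraph.neighborFinset_eq_filter, SimpleGraph.card_neighborFinset_eq_degree]
  have hab : ∀ u v, a u v + b u v + (if u = v then (1:ℝ) else 0) = 1 := by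
    intro u v
    by_cases h : u = v
    · subst h; simp [ha, hb]
    · by_cases hA : G.Adj u v <;> simp [ha, hb, h, hA]
  have hb_sum : ∀ u, ∑ v, b u v = (n : ℝ) - 1 - (G.degree u : ℝ) := by
    intro u
    have h1 : ∑ v, (a u v + b u v + (if u = v then (1:ℝ) else 0)) = (n : ℝ) := by
      rw [Finset.sum_congr rfl (fun v _ => hab u v)]
      simp
    have h2 : ∑ v : Fin n, (if u = v then (1:ℝ) else 0) = 1 := by simp
    rw [Finset.sum_add_distrib, Finset.sum_add_distrib, ha_sum, h2] at h1
    linarith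
  have hdeg_le : ∀ u, (G.degree u : ℝ) ≤ (n : ℝ) - 1 := by
    intro u
    have h1 := G.degree_lt_card_verts u
    rw [Fintype.card_fin] at h1
    have h2 : G.degree u + 1 ≤ n := h1
    have h3 : ((G.degree u : ℝ)) + 1 ≤ (n : ℝ) := by exact_mod_cast h2
    linarith
  have ha_symm : ∀ u v, a u v = a v u := by
    intro u v; simp only [ha]; exact if_congr (G.adj_comm u v) rfl rfl
  set kk : Fin n → ℝ := fun u => (G.degree u : ℝ) with hkk
  set ll : Fin n → ℝ := fun u => (n : ℝ) - 1 - (G.degree u : ℝ) with hll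
  have hkk_nonneg : ∀ u, 0 ≤ kk u := fun u => by positivity
  have hll_nonneg : ∀ u, 0 ≤ ll u := fun u => by
    have := hdeg_le u; simp only [hll]; linarith
  have hkk_le : ∀ u, kk u ≤ (n : ℝ) - 1 := hdeg_le
  have hll_le : ∀ u, ll u ≤ (n : ℝ) - 1 := fun u => by
    have h0 : (0:ℝ) ≤ (G.degree u : ℝ) := by positivity
    simp only [hll]; linarith
  have hkk_col : ∀ x, ∑ u, a u x = kk x := by
    intro x
    rw [Finset.sum_congr rfl (fun u _ => ha_symm u x), ha_sum]
  set P : ℝ := ∑ u, kk u * ll u with hP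
  have hP_nonneg : 0 ≤ P :=
    Finset.sum_nonneg fun u _ => mul_nonneg (hkk_nonneg u) (hll_nonneg u)
  have hsplit : (∑ u, kk u) * (∑ x, ll x) =
      (∑ u, ∑ x, kk u * ll x * a u x) + (∑ u, ∑ x, kk u * ll x * b u x)
        + (∑ u, ∑ x, kk u * ll x * (if u = x then (1:ℝ) else 0)) := by
    rw [Finset.sum_mul_sum]
    rw [← Finset.sum_add_distrib, ← Finset.sum_add_distrib]
    apply Finset.sum_congr rfl
    intro u _
    rw [← Finset.sum_add_distrib, ← Finset.sum_add_distrib]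
    apply Finset.sum_congr rfl
    intro x _
    linear_combination (-(kk u * ll x)) * (hab u x)
  have hT3 : (∑ u, ∑ x, kk u * ll x * (if u = x then (1:ℝ) else 0)) = P := by
    apply Finset.sum_congr rfl
    intro u _
    rw [Finset.sum_eq_single u]
    · simp
    · intro x _ hx; simp [Ne.symm hx]
    · intro h; exact absurd (Finset.mem_univ u) h
  have hT1 : (∑ u, ∑ x, kk u * ll x * a u x) ≤ ((n:ℝ) - 1) * P := by
    calc (∑ u, ∑ x, kk u * ll x * a u x)
        ≤ ∑ u, ∑ x, ((n:ℝ)-1) * (a u x * ll x) := by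
          apply Finset.sum_le_sum; intro u _
          apply Finset.sum_le_sum; intro x _
          have h1 : kk u * ll x * a u x = kk u * (a u x * ll x) := by ring
          rw [h1]
          exact mul_le_mul_of_nonneg_right (hkk_le u)
            (mul_nonneg (ha_nonneg u x) (hll_nonneg x))
      _ = ((n:ℝ)-1) * ∑ x, (∑ u, a u x) * ll x := by
          simp only [← Finset.mul_sum]
          rw [Finset.sum_comm]
          congr 1
          apply Finset.sum_congr rfl
          intro x _
          rw [Finset.sum_mul]
      _ = ((n:ℝ)-1) * P := by
          congr 1
          apply Finset.sum_congr rfl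
          intro x _
          rw [hkk_col x]
  have hT2 : (∑ u, ∑ x, kk u * ll x * b u x) ≤ ((n:ℝ) - 1) * P := by
    calc (∑ u, ∑ x, kk u * ll x * b u x)
        ≤ ∑ u, ∑ x, ((n:ℝ)-1) * (kk u * b u x) := by
          apply Finset.sum_le_sum; intro u _
          apply Finset.sum_le_sum; intro x _
          have h1 : kk u * ll x * b u x = ll x * (kk u * b u x) := by ring
          rw [h1]
          exact mul_le_mul_of_nonneg_right (hll_le x)
            (mul_nonneg (hkk_nonneg u) (hb_nonneg u x))
      _ = ((n:ℝ)-1) * ∑ u, kk u * ∑ x, b u x := by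
          simp only [← Finset.mul_sum]
      _ = ((n:ℝ)-1) * P := by
          congr 1
          apply Finset.sum_congr rfl
          intro u _
          rw [hb_sum u]
  have hfin : (∑ u, kk u) * (∑ x, ll x) ≤ (2 * (n:ℝ) - 1) * P := by
    rw [hsplit, hT3]
    linarith
  have : (2 * (n:ℝ) - 1) * P ≤ 2 * (n:ℝ) * P := by nlinarith
  calc (∑ u, kk u) * (∑ x, ll x) ≤ (2 * (n:ℝ) - 1) * P := hfin
    _ ≤ 2 * (n:ℝ) * P := this

/-- **Normalised degree variance is a true normalisation.**  Let `G` be a finite simple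
graph on `n ≥ 2` vertices with `m ≥ 1` edges such that `2m < n(n-1)`.  Then
`0 ≤ v̄(G) ≤ 1`. -/
theorem normDegVar_mem_Icc (n : ℕ) (hn : 2 ≤ n) (G : SimpleGraph (Fin n))
    [DecidableRel G.Adj] (m : ℕ) (hm : m = G.edgeFinset.card)
    (hm1 : 1 ≤ m) (hd : 2 * m < n * (n - 1)) :
    0 ≤ normDegVar G ∧ normDegVar G ≤ 1 := by
  classical
  unfold normDegVar degVar
  rw [← hm]
  set M : ℝ := (m : ℝ) with hM
  set N : ℝ := (n : ℝ) with hN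
  have hN2 : (2:ℝ) ≤ N := by rw [hN]; exact_mod_cast hn
  have hM1 : (1:ℝ) ≤ M := by rw [hM]; exact_mod_cast hm1
  have hNpos : (0:ℝ) < N := by linarith
  have hN1pos : (0:ℝ) < N - 1 := by linarith
  have hdR : 2 * M < N * (N - 1) := by
    have h' : ((2*m:ℕ):ℝ) < ((n*(n-1):ℕ):ℝ) := by exact_mod_cast hd
    rw [Nat.cast_mul, Nat.cast_mul, Nat.cast_sub (by omega : 1 ≤ n)] at h'
    push_cast at h' ⊢
    linarith
  set V : ℝ := ∑ i, ((G.degree i : ℝ) - 2 * M / N) ^ 2 with hV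
  have hVnonneg : 0 ≤ V := Finset.sum_nonneg fun i _ => sq_nonneg _
  set D : ℝ := N * M * (1 - 2 * M / (N * (N - 1))) with hD
  have hDalt : D = M * (N * (N - 1) - 2 * M) / (N - 1) := by
    rw [hD]; field_simp
  have hDpos : 0 < D := by
    rw [hDalt]
    exact div_pos (mul_pos (by linarith) (by linarith)) hN1pos
  -- sum of degrees
  have hsumdeg : ∑ u : Fin n, (G.degree u : ℝ) = 2 * M := by
    have h0 := G.sum_degrees_eq_twice_card_edges
    have h2 : ((∑ v, G.degree v : ℕ) : ℝ) = ((2 * G.edgeFinset.card : ℕ) : ℝ) := by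
      exact_mod_cast h0
    push_cast at h2
    rw [← hm] at h2
    exact h2
  set S2 : ℝ := ∑ u : Fin n, (G.degree u : ℝ)^2 with hS2
  have hsl : ∑ u : Fin n, (N - 1 - (G.degree u : ℝ)) = N * (N - 1) - 2 * M := by
    rw [Finset.sum_sub_distrib, Finset.sum_const, Finset.card_univ, Fintype.card_fin,
      hsumdeg, nsmul_eq_mul]
  have hPe : ∑ u : Fin n, (G.degree u : ℝ) * (N - 1 - (G.degree u : ℝ))
      = 2 * M * (N - 1) - S2 := by
    have h1 : ∀ u : Fin n, (G.degree u : ℝ) * (N - 1 - (G.degree u : ℝ))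
        = (N - 1) * (G.degree u : ℝ) - (G.degree u : ℝ)^2 := fun u => by ring
    rw [Finset.sum_congr rfl fun u _ => h1 u, Finset.sum_sub_distrib, ← Finset.mul_sum,
      hsumdeg, hS2]
    ring
  have hkey := key_ineq G
  rw [hsumdeg, hsl, hPe] at hkey
  have hVeq : V = S2 - 4 * M^2 / N := by
    rw [hV]
    have h1 : ∀ i : Fin n, ((G.degree i : ℝ) - 2 * M / N)^2
        = (G.degree i : ℝ)^2 - (4 * M / N) * (G.degree i : ℝ) + (2 * M / N)^2 :=
      fun i => by ring
    rw [Finset.sum_congr rfl fun i _ => h1 i, Finset.sum_add_distrib,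
      Finset.sum_sub_distrib, ← Finset.mul_sum, hsumdeg, Finset.sum_const,
      Finset.card_univ, Fintype.card_fin, nsmul_eq_mul, hS2]
    field_simp
    ring
  have hNV : N * V = N * S2 - 4 * M^2 := by
    rw [hVeq]
    field_simp
  have hVN : N * V ≤ M * (N * (N - 1) - 2 * M) := by nlinarith [hkey, hNV]
  have hVle : V ≤ D := by
    rw [hDalt, le_div_iff₀ hN1pos]
    nlinarith [hVN, hVnonneg, hNpos]
  constructor
  · apply mul_nonneg (div_nonneg (by linarith) hDpos.le)
    exact mul_nonneg (by positivity) hVnonneg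
  · have heq : (N - 1) / D * (1 / (N - 1) * V) = V / D := by
      field_simp
    rw [heq, div_le_one hDpos]
    exact hVle
end

section
/- For integers n and p with 1 ≤ p ≤ n−2, the normalised degree variance of the perfect quasi-star graph satisfies v̄(G*(n,p)) = 2(n−1)(n−p−1)/((2n−p−1)·n). -/
/-- The perfect quasi-star graph `G*(n,p)`: the simple graph on vertex set `{0,…,n-1}`
(a copy of `{1,…,n}`) in which the first `p` vertices (the dominant vertices) are
adjacent to all other vertices and there are no other edges. -/
def quasiStar (n p : ℕ) : SimpleGraph (Fin n) where
  Adj i j := i ≠ j ∧ ((i : ℕ) < p ∨ (j : ℕ) < p)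
  symm := ⟨fun _ _ h => ⟨h.1.symm, h.2.symm⟩⟩
  loopless := ⟨fun _ h => h.1 rfl⟩

instance (n p : ℕ) : DecidableRel (quasiStar n p).Adj :=
  fun i j => inferInstanceAs (Decidable (i ≠ j ∧ ((i : ℕ) < p ∨ (j : ℕ) < p)))

/-! The degree of vertex `i` of `G*(n,p)` is `n - 1` if `i` is dominant and `p` otherwise, so
every degree statistic is a two-term sum: `2m = p(2n - p - 1)`, the squared deviations from the
mean degree `2m/n` add up to `p(n - p)(n - p - 1)²/n`, and `1 - d = (n - p)(n - p - 1)/(n(n - 1))`.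
Substituting, the factors `n - p` and `n - p - 1` cancel. -/

open Finset

theorem Fin.sum_ite_val_lt {M : Type*} [AddCommMonoid M] {n p : ℕ} (hpn : p ≤ n) (a b : M) :
    ∑ i : Fin n, (if (i : ℕ) < p then a else b) = p • a + (n - p) • b := by
  have hcard := card_filter_add_card_filter_not (s := (univ : Finset (Fin n)))
    (fun i => (i : ℕ) < p)
  rw [Fin.card_filter_val_lt, card_univ, Fintype.card_fin, min_eq_right hpn] at hcard
  rw [sum_ite, Finset.sum_const, Finset.sum_const, Fin.card_filter_val_lt, min_eq_right hpn]
  congr 2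
  omega

section QuasiStar

variable {n p : ℕ}

theorem quasiStar_neighborFinset_of_lt {i : Fin n} (hi : (i : ℕ) < p) :
    (quasiStar n p).neighborFinset i = univ.erase i := by
  ext j
  simp only [SimpleGraph.mem_neighborFinset, mem_erase, mem_univ, and_true]
  exact ⟨fun h => Ne.symm h.1, fun h => ⟨Ne.symm h, Or.inl hi⟩⟩

theorem quasiStar_neighborFinset_of_le {i : Fin n} (hi : p ≤ (i : ℕ)) :
    (quasiStar n p).neighborFinset i = ({j | (j : ℕ) < p} : Finset (Fin n)) := by
  ext j
  rw [SimpleGraph.mem_neighborFinset]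
  simp only [quasiStar, mem_filter, mem_univ, true_and]
  constructor
  · rintro ⟨-, h | h⟩
    · omega
    · exact h
  · rintro h
    exact ⟨by rintro rfl; omega, Or.inr h⟩

theorem quasiStar_degree (i : Fin n) :
    (quasiStar n p).degree i = if (i : ℕ) < p then n - 1 else p := by
  rw [← SimpleGraph.card_neighborFinset_eq_degree]
  split_ifs with hi
  · simp [quasiStar_neighborFinset_of_lt hi]
  · rw [quasiStar_neighborFinset_of_le (not_lt.mp hi), Fin.card_filter_val_lt]
    omega

theorem quasiStar_sum_comp_degree (hpn : p ≤ n) (g : ℝ → ℝ) :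
    ∑ i, g ((quasiStar n p).degree i) = p * g ((n : ℝ) - 1) + ((n : ℝ) - p) * g p := by
  have hdeg (i : Fin n) : g ((quasiStar n p).degree i)
      = if (i : ℕ) < p then g ((n : ℝ) - 1) else g p := by
    rw [quasiStar_degree]
    split_ifs
    · rw [Nat.cast_pred i.pos]
    · rfl
  simp_rw [hdeg, Fin.sum_ite_val_lt hpn, nsmul_eq_mul, Nat.cast_sub hpn]

theorem quasiStar_card_edgeFinset (hpn : p ≤ n) :
    ((quasiStar n p).edgeFinset.card : ℝ) = p * (2 * n - p - 1) / 2 := by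
  have h := congrArg (Nat.cast (R := ℝ))
    (SimpleGraph.sum_degrees_eq_twice_card_edges (quasiStar n p))
  push_cast at h
  rw [quasiStar_sum_comp_degree hpn (fun x => x)] at h
  linarith

end QuasiStar

/-- **Closed form of the normalised degree variance of a perfect quasi-star graph.**
For integers `n` and `p` with `1 ≤ p ≤ n - 2`,
`v̄(G*(n,p)) = 2(n-1)(n-p-1)/((2n-p-1)·n)`. -/
theorem normDegVar_quasiStar (n p : ℕ) (hp1 : 1 ≤ p) (hp2 : p ≤ n - 2) :
    normDegVar (quasiStar n p)
      = 2 * ((n : ℝ) - 1) * ((n : ℝ) - (p : ℝ) - 1)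
          / ((2 * (n : ℝ) - (p : ℝ) - 1) * (n : ℝ)) := by
  have hpn : p ≤ n := by omega
  have hn : (p : ℝ) + 2 ≤ n := by exact_mod_cast (by omega : p + 2 ≤ n)
  have hn0 : (n : ℝ) ≠ 0 := by linarith
  have hn1 : (n : ℝ) - 1 ≠ 0 := by linarith
  have hnp : (n : ℝ) - p ≠ 0 := by linarith
  rw [normDegVar, degVar]
  set m : ℝ := ((quasiStar n p).edgeFinset.card : ℝ)
  have hm : m = p * (2 * n - p - 1) / 2 := quasiStar_card_edgeFinset hpn
  have hdensity : 1 - 2 * m / (n * (n - 1)) = (n - p) * (n - p - 1) / (n * (n - 1)) := by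
    rw [hm]
    field_simp
    ring
  have hdev : p * (n - 1 - 2 * m / n) ^ 2 + (n - p) * (p - 2 * m / n) ^ 2
      = p * (n - p) * (n - p - 1) ^ 2 / n := by
    rw [hm]
    field_simp
    ring
  rw [quasiStar_sum_comp_degree hpn (fun x => (x - 2 * m / n) ^ 2), hdev, hdensity, hm]
  field_simp
end

section
/- Let G be a finite simple graph on n ≥ 2 vertices with m edges such that 0 < m and 2m < n(n−1). Then the normalised degree variance of G equals that of its complement: v̄(G) = v̄(Ĝ). -/
/-! Complementation maps each degree `k` to `n - 1 - k` and the mean degree `2m/n` to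
`n - 1 - 2m/n`, so every deviation from the mean only changes sign and `v(Ĝ) = v(G)`.
The normalisation is symmetric as well: `n·m·(1 - d) = m·(n(n-1) - 2m)/(n-1) = 2·m·m̂/(n-1)`,
where `m̂ = n(n-1)/2 - m` is the number of edges of `Ĝ`. -/

open Finset

namespace SimpleGraph

variable {V : Type*} [Fintype V] [DecidableEq V] (G : SimpleGraph V) [DecidableRel G.Adj]

theorem cast_degree_compl {R : Type*} [AddGroupWithOne R] (v : V) :
    (Gᶜ.degree v : R) = Fintype.card V - 1 - G.degree v := by
  have hV : 1 ≤ Fintype.card V := Fintype.card_pos_iff.mpr ⟨v⟩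
  have hdeg : G.degree v ≤ Fintype.card V - 1 := Nat.le_sub_one_of_lt (G.degree_lt_card_verts v)
  rw [degree_compl, Nat.cast_sub hdeg, Nat.cast_sub hV, Nat.cast_one]

theorem two_mul_cast_card_edgeFinset_compl {R : Type*} [CommRing R] :
    2 * (#Gᶜ.edgeFinset : R) = Fintype.card V * (Fintype.card V - 1) - 2 * #G.edgeFinset := by
  have hsum (H : SimpleGraph V) [DecidableRel H.Adj] :
      2 * (#H.edgeFinset : R) = ∑ v, (H.degree v : R) := by
    rw [← Nat.cast_sum, H.sum_degrees_eq_twice_card_edges, Nat.cast_mul, Nat.cast_ofNat]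
  rw [hsum, hsum, sum_congr rfl fun v _ => G.cast_degree_compl v, sum_sub_distrib,
    sum_const, card_univ, nsmul_eq_mul]

end SimpleGraph

section

variable {n : ℕ} (G : SimpleGraph (Fin n)) [DecidableRel G.Adj]

theorem degVar_compl : degVar Gᶜ = degVar G := by
  unfold degVar
  congr 1
  refine sum_congr rfl fun i _ => ?_
  have hn : (n : ℝ) ≠ 0 := Nat.cast_ne_zero.mpr (Fin.pos i).ne'
  have hm := G.two_mul_cast_card_edgeFinset_compl (R := ℝ)
  rw [Fintype.card_fin] at hm
  have hdev : (Gᶜ.degree i : ℝ) - 2 * #Gᶜ.edgeFinset / n =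
      -((G.degree i : ℝ) - 2 * #G.edgeFinset / n) := by
    rw [G.cast_degree_compl, Fintype.card_fin, hm]
    field_simp
    ring
  rw [hdev, neg_sq]

theorem normDegVar_eq_mul_degVar (hn : 2 ≤ n) :
    normDegVar G = ((n : ℝ) - 1) ^ 2 /
      (#G.edgeFinset * ((n : ℝ) * (n - 1) - 2 * #G.edgeFinset)) * degVar G := by
  have hn2 : (2 : ℝ) ≤ n := by exact_mod_cast hn
  have hn0 : (n : ℝ) ≠ 0 := by positivity
  have hn1 : (n : ℝ) - 1 ≠ 0 := by linarith
  have hnorm : (n : ℝ) * #G.edgeFinset * (1 - 2 * #G.edgeFinset / (n * (n - 1))) =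
      #G.edgeFinset * (n * (n - 1) - 2 * #G.edgeFinset) / (n - 1) := by
    field_simp
  rw [normDegVar, hnorm, div_div_eq_mul_div, sq]

end

theorem normDegVar_compl_general (n : ℕ) (hn : 2 ≤ n) (G : SimpleGraph (Fin n))
    [DecidableRel G.Adj] :
    normDegVar G = normDegVar Gᶜ := by
  have hm := G.two_mul_cast_card_edgeFinset_compl (R := ℝ)
  rw [Fintype.card_fin] at hm
  have hmc : (n : ℝ) * (n - 1) - 2 * #Gᶜ.edgeFinset = 2 * #G.edgeFinset := by linarith
  rw [normDegVar_eq_mul_degVar G hn, normDegVar_eq_mul_degVar Gᶜ hn, degVar_compl, ← hm, hmc]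
  ring

/-- **Complement invariance of normalised degree variance.**  Let `G` be a finite simple
graph on `n ≥ 2` vertices with `m` edges such that `0 < m` and `2m < n(n-1)`.  Then the
normalised degree variance of `G` equals that of its complement: `v̄(G) = v̄(Ĝ)`. -/
theorem normDegVar_compl (n : ℕ) (hn : 2 ≤ n) (G : SimpleGraph (Fin n))
    [DecidableRel G.Adj] (m : ℕ) (hm : m = G.edgeFinset.card)
    (hm0 : 0 < m) (hd : 2 * m < n * (n - 1)) :
    normDegVar G = normDegVar Gᶜ :=
  normDegVar_compl_general n hn G
end

section
/- Let G be a finite simple graph on n ≥ 2 vertices with m edges, density d = 2m/(n(n−1)) satisfying m ≥ 1 and d < 1, and suppose at least x of the vertices have degree exactly a, where 0 ≤ x < n. Then the normalised degree variance satisfies v̄(G) ≥ (1/(1−d))·x·(a·n − 2m)²/(n²·(n−x)·m). -/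
open Finset

theorem Finset.card_mul_card_mul_sq_div_le_sum_sq {ι : Type*} [DecidableEq ι]
    {s t : Finset ι} {f : ι → ℝ} {c : ℝ} (hts : t ⊆ s) (hcard : #t < #s)
    (hf : ∀ i ∈ t, f i = c) (hsum : ∑ i ∈ s, f i = 0) :
    #s * #t * c ^ 2 / (#s - #t) ≤ ∑ i ∈ s, f i ^ 2 := by
  have hpos : (0 : ℝ) < #s - #t := sub_pos.2 (by exact_mod_cast hcard)
  have hsum_t : ∑ i ∈ t, f i = #t * c := by
    rw [sum_congr rfl hf, sum_const, nsmul_eq_mul]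
  have hsq_t : ∑ i ∈ t, f i ^ 2 = #t * c ^ 2 := by
    rw [sum_congr rfl fun i hi => by rw [hf i hi], sum_const, nsmul_eq_mul]
  have hsum_rest : ∑ i ∈ s \ t, f i = -(#t * c) := by
    linarith [sum_sdiff (f := f) hts]
  have hcard_rest : ((#(s \ t) : ℕ) : ℝ) = #s - #t := by
    rw [card_sdiff_of_subset hts, Nat.cast_sub hcard.le]
  have cauchy_schwarz : (#t * c) ^ 2 ≤ (#s - #t) * ∑ i ∈ s \ t, f i ^ 2 := by
    simpa [hsum_rest, hcard_rest] using sq_sum_le_card_mul_sum_sq (s := s \ t) (f := f)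
  calc #s * #t * c ^ 2 / (#s - #t)
      = #t * c ^ 2 + (#t * c) ^ 2 / (#s - #t) := by field_simp; ring
    _ ≤ #t * c ^ 2 + ∑ i ∈ s \ t, f i ^ 2 := by
      gcongr
      rwa [div_le_iff₀' hpos]
    _ = ∑ i ∈ s, f i ^ 2 := by
      rw [← hsq_t, ← sum_sdiff (f := fun i => f i ^ 2) hts, add_comm]

namespace SimpleGraph

variable {V : Type*} [Fintype V] (G : SimpleGraph V) [DecidableRel G.Adj]

theorem sum_degree_sub_average_eq_zero :
    ∑ v, ((G.degree v : ℝ) - 2 * #G.edgeFinset / Fintype.card V) = 0 := by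
  rcases isEmpty_or_nonempty V with _ | _
  · simp
  have hsum : ∑ v, (G.degree v : ℝ) = 2 * #G.edgeFinset := by
    exact_mod_cast G.sum_degrees_eq_twice_card_edges
  rw [sum_sub_distrib, hsum, sum_const, card_univ, nsmul_eq_mul,
    mul_div_cancel₀ _ (Nat.cast_ne_zero.2 Fintype.card_ne_zero), sub_self]

theorem div_le_sum_sq_degree_sub_average {x a : ℕ} (hx : x < Fintype.card V)
    (hxa : x ≤ #{v | G.degree v = a}) :
    (x : ℝ) * (a * Fintype.card V - 2 * #G.edgeFinset) ^ 2
        / (Fintype.card V * (Fintype.card V - x))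
      ≤ ∑ v, ((G.degree v : ℝ) - 2 * #G.edgeFinset / Fintype.card V) ^ 2 := by
  classical
  obtain ⟨T, hT, rfl⟩ := exists_subset_card_eq hxa
  have hn : (Fintype.card V : ℝ) ≠ 0 := Nat.cast_ne_zero.2 (by omega)
  have hdeg : ∀ v ∈ T, (G.degree v : ℝ) - 2 * #G.edgeFinset / Fintype.card V
      = a - 2 * #G.edgeFinset / Fintype.card V := by
    intro v hv
    rw [(mem_filter.1 (hT hv)).2]
  have := card_mul_card_mul_sq_div_le_sum_sq (subset_univ T) (by simpa using hx) hdeg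
    G.sum_degree_sub_average_eq_zero
  rw [card_univ] at this
  convert this using 1
  field_simp

end SimpleGraph

theorem normDegVar_eq_sum_sq_div {n : ℕ} (hn : n ≠ 1) (G : SimpleGraph (Fin n))
    [DecidableRel G.Adj] :
    normDegVar G = (∑ i, ((G.degree i : ℝ) - 2 * #G.edgeFinset / n) ^ 2) /
      (n * #G.edgeFinset * (1 - 2 * #G.edgeFinset / (n * (n - 1)))) := by
  have : (n : ℝ) - 1 ≠ 0 := sub_ne_zero.2 (by exact_mod_cast hn)
  rw [normDegVar, degVar]
  field_simp

theorem normDegVar_ge_general (n : ℕ) (hn : 2 ≤ n) (G : SimpleGraph (Fin n))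
    [DecidableRel G.Adj] (m x a : ℕ) (hm : m = G.edgeFinset.card)
    (hd : 2 * m < n * (n - 1)) (hx : x < n)
    (hxa : x ≤ (Finset.univ.filter fun i => G.degree i = a).card) :
    (1 / (1 - 2 * (m : ℝ) / ((n : ℝ) * ((n : ℝ) - 1)))) *
        ((x : ℝ) * ((a : ℝ) * (n : ℝ) - 2 * (m : ℝ)) ^ 2
          / ((n : ℝ) ^ 2 * ((n : ℝ) - (x : ℝ)) * (m : ℝ)))
      ≤ normDegVar G := by
  subst hm
  have hdensity : 2 * (#G.edgeFinset : ℝ) ≤ n * (n - 1) := by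
    have : ((2 * #G.edgeFinset : ℕ) : ℝ) ≤ (n * (n - 1) : ℕ) := by exact_mod_cast hd.le
    push_cast [Nat.cast_sub (by omega : 1 ≤ n)] at this
    exact this
  have hbound := G.div_le_sum_sq_degree_sub_average (by simpa using hx) (by simpa using hxa)
  simp only [Fintype.card_fin] at hbound
  have hdenom : 0 ≤ (n : ℝ) * #G.edgeFinset * (1 - 2 * #G.edgeFinset / (n * (n - 1))) :=
    mul_nonneg (by positivity) <| sub_nonneg.2 <| div_le_one_of_le₀ hdensity <|
      (by positivity : (0 : ℝ) ≤ 2 * #G.edgeFinset).trans hdensity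
  rw [normDegVar_eq_sum_sq_div (by omega)]
  calc _ = (x : ℝ) * (a * n - 2 * #G.edgeFinset) ^ 2 / (n * (n - x))
          / (n * #G.edgeFinset * (1 - 2 * #G.edgeFinset / (n * (n - 1)))) := by
        simp only [div_eq_mul_inv, mul_inv]
        ring
    _ ≤ _ := div_le_div_of_nonneg_right hbound hdenom

/-- **Lower bound for the normalised degree variance of graphs with a fixed proportion
of vertices of a given degree.**  Let `G` be a finite simple graph on `n ≥ 2` vertices
with `m` edges, density `d = 2m/(n(n-1))` satisfying `m ≥ 1` and `d < 1`, and suppose at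
least `x` of the vertices have degree exactly `a`, where `0 ≤ x < n`.  Then
`v̄(G) ≥ (1/(1-d)) · x·(a·n - 2m)²/(n²·(n-x)·m)`. -/
theorem normDegVar_ge (n : ℕ) (hn : 2 ≤ n) (G : SimpleGraph (Fin n))
    [DecidableRel G.Adj] (m x a : ℕ) (hm : m = G.edgeFinset.card) (hm1 : 1 ≤ m)
    (hd : 2 * m < n * (n - 1)) (hx : x < n)
    (hxa : x ≤ (Finset.univ.filter fun i => G.degree i = a).card) :
    (1 / (1 - 2 * (m : ℝ) / ((n : ℝ) * ((n : ℝ) - 1)))) *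
        ((x : ℝ) * ((a : ℝ) * (n : ℝ) - 2 * (m : ℝ)) ^ 2
          / ((n : ℝ) ^ 2 * ((n : ℝ) - (x : ℝ)) * (m : ℝ)))
      ≤ normDegVar G :=
  normDegVar_ge_general n hn G m x a hm hd hx hxa
end
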